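/- arXiv:1707.04697 — 2 statements merged into one kernel-verified Lean document; each statement's English description precedes it below -/
import Mathlib

section
/- Let R be a commutative ring with identity which is not an integral domain, and let I and J be distinct nonzero annihilating ideals of R. If Ann_R(I) ⊄ Ann_R(J) and Ann_R(J) ⊄ Ann_R(I), then I and J are adjacent in the annihilator-ideal graph A_I(R). Moreover, if R is reduced, then the converse also holds: if I and J are adjacent in A_I(R), then Ann_R(I) ⊄ Ann_R(J) and Ann_R(J) ⊄ Ann_R(I). -/
/-!
Both annihilators of `I` and `J` lie in `Ann(IJ)`, so `Ann(IJ) = Ann(I) ∪ Ann(J)` forces the union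
of two additive subgroups to be a subgroup, which happens only when one contains the other.
Conversely, in a reduced ring `Ann(I) ⊆ Ann(J)` gives `Ann(IJ) = Ann(J)`: if `r I J = 0` and
`x ∈ J`, then `r x ∈ Ann(I) ⊆ Ann(J)`, so `(r x)² = r (r x) x = 0` and hence `r x = 0`.
-/

/-- The vertex set of the annihilator-ideal/annihilating-ideal graphs:
nonzero ideals with nonzero annihilator. -/
abbrev AnnVert (R : Type*) [CommRing R] : Type _ :=
  {I : Ideal R // I ≠ ⊥ ∧ Submodule.annihilator I ≠ ⊥}

/-- The annihilator-ideal graph `A_I(R)`. -/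
def annihilatorIdealGraph (R : Type*) [CommRing R] : SimpleGraph (AnnVert R) where
  Adj I J := I ≠ J ∧
    ((Submodule.annihilator (I.1 * J.1) : Ideal R) : Set R) ≠
      ↑(Submodule.annihilator I.1) ∪ ↑(Submodule.annihilator J.1)
  symm := ⟨by
    rintro I J ⟨hne, h⟩
    exact ⟨hne.symm, by rwa [mul_comm, Set.union_comm]⟩⟩
  loopless := ⟨by rintro I ⟨h, -⟩; exact h rfl⟩

/-- The annihilating-ideal graph `𝔸𝔾(R)`. -/
def annihilatingIdealGraph (R : Type*) [CommRing R] : SimpleGraph (AnnVert R) where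
  Adj I J := I ≠ J ∧ I.1 * J.1 = ⊥
  symm := ⟨by rintro I J ⟨hne, h⟩; exact ⟨hne.symm, by rwa [mul_comm]⟩⟩
  loopless := ⟨by rintro I ⟨h, -⟩; exact h rfl⟩

/-- `G` is a complete bipartite graph with parts `s` and `t`. -/
def SimpleGraph.IsCompleteBipartiteWith {V : Type*} (G : SimpleGraph V) (s t : Set V) : Prop :=
  Disjoint s t ∧ s ∪ t = Set.univ ∧
    ∀ u v, G.Adj u v ↔ (u ∈ s ∧ v ∈ t) ∨ (u ∈ t ∧ v ∈ s)

/-- `G` is a star graph: complete bipartite with one part a single vertex and the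
other part nonempty. -/
def SimpleGraph.IsStarGraph {V : Type*} (G : SimpleGraph V) : Prop :=
  ∃ (c : V) (t : Set V), t.Nonempty ∧ G.IsCompleteBipartiteWith {c} t

open Submodule

section

variable {R : Type*} [CommRing R]

lemma annihilator_le_annihilator_mul_left (I J : Ideal R) :
    annihilator I ≤ annihilator (I * J) :=
  annihilator_mono Ideal.mul_le_left

lemma annihilator_le_annihilator_mul_right (I J : Ideal R) :
    annihilator J ≤ annihilator (I * J) :=
  annihilator_mono Ideal.mul_le_right

lemma annihilator_le_or_le_of_coe_annihilator_mul_eq_union {I J : Ideal R}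
    (h : (annihilator (I * J) : Set R) = ↑(annihilator I) ∪ ↑(annihilator J)) :
    annihilator J ≤ annihilator I ∨ annihilator I ≤ annihilator J :=
  (AddSubgroupClass.subset_union.mp h.le).imp
    (le_trans (annihilator_le_annihilator_mul_right I J))
    (le_trans (annihilator_le_annihilator_mul_left I J))

lemma annihilator_mul_eq_right_of_annihilator_le [IsReduced R] {I J : Ideal R}
    (h : annihilator I ≤ annihilator J) : annihilator (I * J) = annihilator J := by
  refine le_antisymm (fun r hr => ?_) (annihilator_le_annihilator_mul_right I J)
  rw [mem_annihilator] at hr ⊢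
  intro x hx
  have hrx : r * x ∈ annihilator I := mem_annihilator.mpr fun y hy => by
    simpa [mul_comm, mul_left_comm] using hr (y * x) (Ideal.mul_mem_mul hy hx)
  have hrxx : r * x * x = 0 := mem_annihilator.mp (h hrx) x hx
  have hsq : (r * x) ^ 2 = 0 :=
    calc (r * x) ^ 2 = r * (r * x * x) := by ring
      _ = 0 := by rw [hrxx, mul_zero]
  exact IsReduced.eq_zero _ ⟨2, hsq⟩

lemma coe_annihilator_mul_eq_union_iff [IsReduced R] {I J : Ideal R} :
    (annihilator (I * J) : Set R) = ↑(annihilator I) ∪ ↑(annihilator J) ↔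
      annihilator J ≤ annihilator I ∨ annihilator I ≤ annihilator J := by
  refine ⟨annihilator_le_or_le_of_coe_annihilator_mul_eq_union, ?_⟩
  rintro (h | h)
  · rw [mul_comm, annihilator_mul_eq_right_of_annihilator_le h, Set.union_eq_left.mpr h]
  · rw [annihilator_mul_eq_right_of_annihilator_le h, Set.union_eq_right.mpr h]

end

theorem stmt5_general (R : Type*) [CommRing R]
    (I J : AnnVert R) (hIJ : I ≠ J) :
    ((¬ Submodule.annihilator I.1 ≤ Submodule.annihilator J.1 ∧
        ¬ Submodule.annihilator J.1 ≤ Submodule.annihilator I.1) →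
      (annihilatorIdealGraph R).Adj I J) ∧
    (IsReduced R →
      (annihilatorIdealGraph R).Adj I J →
      (¬ Submodule.annihilator I.1 ≤ Submodule.annihilator J.1 ∧
        ¬ Submodule.annihilator J.1 ≤ Submodule.annihilator I.1)) := by
  refine ⟨fun ⟨hI_not_le, hJ_not_le⟩ => ⟨hIJ, fun h => ?_⟩, fun _ ⟨_, hne⟩ => ?_⟩
  · exact (annihilator_le_or_le_of_coe_annihilator_mul_eq_union h).elim hJ_not_le hI_not_le
  · exact not_or.mp (mt coe_annihilator_mul_eq_union_iff.mpr hne) |>.symm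

theorem stmt5 (R : Type*) [CommRing R] [Nontrivial R] (hdom : ¬IsDomain R)
    (I J : AnnVert R) (hIJ : I ≠ J) :
    ((¬ Submodule.annihilator I.1 ≤ Submodule.annihilator J.1 ∧
        ¬ Submodule.annihilator J.1 ≤ Submodule.annihilator I.1) →
      (annihilatorIdealGraph R).Adj I J) ∧
    (IsReduced R →
      (annihilatorIdealGraph R).Adj I J →
      (¬ Submodule.annihilator I.1 ≤ Submodule.annihilator J.1 ∧
        ¬ Submodule.annihilator J.1 ≤ Submodule.annihilator I.1)) :=
  stmt5_general R I J hIJ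
end

section
/- Let R be a reduced commutative ring with identity which is not an integral domain. Then the following are equivalent: (i) the annihilator-ideal graph A_I(R) is a complete graph; (ii) the annihilating-ideal graph 𝔸𝔾(R) is a complete graph; (iii) R is ring-isomorphic to F₁ × F₂ for some fields F₁ and F₂. -/
open Ideal

section AnnihilatorGraph

variable {R : Type*} [CommRing R]

theorem ne_top_of_annihilator_ne_bot {I : Ideal R} (h : Submodule.annihilator I ≠ ⊥) :
    I ≠ ⊤ := by
  rintro rfl
  refine h (eq_bot_iff.mpr fun r hr => ?_)
  simpa using Submodule.mem_annihilator.mp hr 1 Submodule.mem_top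

variable (R) in
theorem annihilatingIdealGraph_le_annihilatorIdealGraph :
    annihilatingIdealGraph R ≤ annihilatorIdealGraph R := by
  rintro I J ⟨hne, hIJ⟩
  refine ⟨hne, fun h => ?_⟩
  have h1 : (1 : R) ∈ (Submodule.annihilator (I.1 * J.1) : Set R) := by
    rw [hIJ, Submodule.annihilator_bot]
    trivial
  rw [h] at h1
  rcases h1 with h1 | h1
  · exact I.2.1 (Submodule.annihilator_eq_top_iff.mp ((eq_top_iff_one _).mpr h1))
  · exact J.2.1 (Submodule.annihilator_eq_top_iff.mp ((eq_top_iff_one _).mpr h1))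

theorem eq_of_annihilator_mul_eq
    (hc : ∀ I J : AnnVert R, I ≠ J → (annihilatorIdealGraph R).Adj I J) {I J : AnnVert R}
    (hmul : Submodule.annihilator (I.1 * J.1) = Submodule.annihilator I.1)
    (hle : Submodule.annihilator J.1 ≤ Submodule.annihilator I.1) : I = J := by
  by_contra hne
  refine (hc I J hne).2 ?_
  rw [hmul, Set.union_eq_left.mpr hle]

end AnnihilatorGraph

section Idempotent

variable {R : Type*} [CommRing R] {e : R}

theorem mul_eq_self_of_mem_span_singleton (he : IsIdempotentElem e) {x : R}
    (hx : x ∈ span {e}) : x * e = x := by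
  obtain ⟨c, rfl⟩ := mem_span_singleton'.mp hx
  rw [mul_assoc, he.eq]

theorem isCompl_span_singleton_one_sub (he : IsIdempotentElem e) :
    IsCompl (span {e}) (span {1 - e}) := by
  constructor
  · rw [Submodule.disjoint_def]
    intro x hx hx'
    have h := mul_eq_self_of_mem_span_singleton he hx
    have h' := mul_eq_self_of_mem_span_singleton he.one_sub hx'
    linear_combination -h - h'
  · rw [codisjoint_iff, eq_top_iff_one]
    exact Submodule.mem_sup.mpr
      ⟨e, mem_span_singleton_self e, 1 - e, mem_span_singleton_self _, add_sub_cancel e 1⟩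

theorem annihilator_span_singleton_ne_bot_of_isIdempotentElem (he : IsIdempotentElem e)
    (he1 : e ≠ 1) :
    Submodule.annihilator (span {e}) ≠ ⊥ := by
  rw [Submodule.ne_bot_iff]
  exact ⟨1 - e, (Submodule.mem_annihilator_span_singleton _ _).mpr he.one_sub_mul_self,
    sub_ne_zero.mpr he1.symm⟩

theorem isAtom_span_singleton_of_isIdempotentElem
    (hc : ∀ I J : AnnVert R, I ≠ J → (annihilatorIdealGraph R).Adj I J)
    (he : IsIdempotentElem e) (he0 : e ≠ 0) (he1 : e ≠ 1) : IsAtom (span {e}) := by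
  have hann := annihilator_span_singleton_ne_bot_of_isIdempotentElem he he1
  have he0' : span {e} ≠ ⊥ := span_singleton_eq_bot.not.mpr he0
  refine ⟨he0', fun L hL => ?_⟩
  by_contra hL0
  have hLe : L * span {e} = L := by
    refine le_antisymm mul_le_left fun x hx => ?_
    rw [← mul_eq_self_of_mem_span_singleton he (hL.le hx)]
    exact mul_mem_mul hx (mem_span_singleton_self e)
  have hannL := Submodule.annihilator_mono (R := R) hL.le
  have := eq_of_annihilator_mul_eq hc (I := ⟨L, hL0, ne_bot_of_le_ne_bot hann hannL⟩)
    (J := ⟨span {e}, he0', hann⟩) (by rw [hLe]) hannL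
  exact hL.ne (congrArg Subtype.val this)

theorem isMaximal_span_singleton_of_isIdempotentElem
    (hc : ∀ I J : AnnVert R, I ≠ J → (annihilatorIdealGraph R).Adj I J)
    (he : IsIdempotentElem e) (he0 : e ≠ 0) (he1 : e ≠ 1) : (span {e}).IsMaximal := by
  rw [isMaximal_def, (isCompl_span_singleton_one_sub he).isCoatom_iff_isAtom]
  exact isAtom_span_singleton_of_isIdempotentElem hc he.one_sub (sub_ne_zero.mpr he1.symm)
    (by simpa using he0)

end Idempotent

section Reduced

variable {R : Type*} [CommRing R] [IsReduced R]

theorem annihilator_span_singleton_pow (a : R) {n : ℕ} (hn : n ≠ 0) :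
    Submodule.annihilator (span {a ^ n}) = Submodule.annihilator (span {a}) := by
  obtain ⟨k, rfl⟩ := Nat.exists_eq_add_one_of_ne_zero hn
  ext r
  simp only [span, Submodule.mem_annihilator_span_singleton, smul_eq_mul]
  constructor
  · intro h
    exact IsReduced.eq_zero _ ⟨k + 1, by linear_combination r ^ k * h⟩
  · intro h
    linear_combination a ^ k * h

theorem span_singleton_eq_span_singleton_sq
    (hc : ∀ I J : AnnVert R, I ≠ J → (annihilatorIdealGraph R).Adj I J) {a : R} (ha : a ≠ 0)
    (hann : Submodule.annihilator (span {a}) ≠ ⊥) : span {a} = span {a ^ 2} := by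
  have vertex : ∀ n ≠ 0, span {a ^ n} ≠ ⊥ ∧ Submodule.annihilator (span {a ^ n}) ≠ ⊥ :=
    fun n hn => ⟨span_singleton_eq_bot.not.mpr (pow_ne_zero n ha),
      by rwa [annihilator_span_singleton_pow a hn]⟩
  have h := eq_of_annihilator_mul_eq hc (I := ⟨span {a ^ 1}, vertex 1 one_ne_zero⟩)
    (J := ⟨span {a ^ 2}, vertex 2 two_ne_zero⟩) ?_ ?_
  · simpa using congrArg Subtype.val h
  · rw [span_singleton_mul_span_singleton, ← pow_add,
      annihilator_span_singleton_pow a (by norm_num), annihilator_span_singleton_pow a one_ne_zero]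
  · exact ((annihilator_span_singleton_pow a two_ne_zero).trans
      (annihilator_span_singleton_pow a one_ne_zero).symm).le

theorem exists_isIdempotentElem_ne_zero_ne_one [Nontrivial R]
    (hc : ∀ I J : AnnVert R, I ≠ J → (annihilatorIdealGraph R).Adj I J) (hdom : ¬IsDomain R) :
    ∃ e : R, IsIdempotentElem e ∧ e ≠ 0 ∧ e ≠ 1 := by
  obtain ⟨a, b, hab, ha, hb⟩ : ∃ a b : R, a * b = 0 ∧ a ≠ 0 ∧ b ≠ 0 := by
    by_contra! h
    have : NoZeroDivisors R := ⟨fun hab => or_iff_not_imp_left.mpr (h _ _ hab)⟩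
    exact hdom (NoZeroDivisors.to_isDomain R)
  have hann : Submodule.annihilator (span {a}) ≠ ⊥ := (Submodule.ne_bot_iff _).mpr
    ⟨b, (Submodule.mem_annihilator_span_singleton _ _).mpr (by rwa [smul_eq_mul, mul_comm]), hb⟩
  have hidem : IsIdempotentElem (span {a}) := by
    rw [IsIdempotentElem, span_singleton_mul_span_singleton, ← sq,
      ← span_singleton_eq_span_singleton_sq hc ha hann]
  obtain ⟨e, he, hae⟩ := (isIdempotentElem_iff_of_fg _ (Submodule.fg_span_singleton a)).mp hidem
  refine ⟨e, he, ?_, ?_⟩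
  · rintro rfl
    exact ha (by simpa using hae)
  · rintro rfl
    exact ne_top_of_annihilator_ne_bot hann (hae.trans span_singleton_one)

end Reduced

section ProdField

variable {K L : Type*} [Field K] [Field L]

theorem Ideal.eq_prod_top_bot_or_eq_prod_bot_top {I : Ideal (K × L)} (h0 : I ≠ ⊥) (h1 : I ≠ ⊤) :
    I = prod ⊤ ⊥ ∨ I = prod ⊥ ⊤ := by
  rw [I.ideal_prod_eq] at h0 h1 ⊢
  rcases (I.map (RingHom.fst K L)).eq_bot_or_top with h | h <;>
    rcases (I.map (RingHom.snd K L)).eq_bot_or_top with h' | h' <;>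
    simp_all [prod_bot_bot, prod_top_top]

theorem Ideal.mul_eq_bot_of_ne_of_ne_bot_of_ne_top {I J : Ideal (K × L)} (hI0 : I ≠ ⊥)
    (hI1 : I ≠ ⊤) (hJ0 : J ≠ ⊥) (hJ1 : J ≠ ⊤) (hIJ : I ≠ J) : I * J = ⊥ := by
  have hdisj : prod (⊤ : Ideal K) (⊥ : Ideal L) * prod ⊥ ⊤ = ⊥ :=
    eq_bot_iff.mpr (mul_le_inf.trans fun x hx => by simp_all [mem_prod, Prod.ext_iff])
  rcases eq_prod_top_bot_or_eq_prod_bot_top hI0 hI1 with rfl | rfl <;>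
    rcases eq_prod_top_bot_or_eq_prod_bot_top hJ0 hJ1 with rfl | rfl
  all_goals first | exact absurd rfl hIJ | simpa [mul_comm] using hdisj

theorem annihilatingIdealGraph_adj_of_ringEquiv_prod {R : Type*} [CommRing R]
    (φ : R ≃+* K × L) {I J : AnnVert R} (hIJ : I ≠ J) : (annihilatingIdealGraph R).Adj I J := by
  let e := φ.idealComapOrderIso.symm
  have hbot (I : AnnVert R) : e I.1 ≠ ⊥ := e.map_bot ▸ e.injective.ne I.2.1
  have htop (I : AnnVert R) : e I.1 ≠ ⊤ :=
    e.map_top ▸ e.injective.ne (ne_top_of_annihilator_ne_bot I.2.2)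
  refine ⟨hIJ, e.injective ?_⟩
  rw [e.map_bot]
  exact (Ideal.map_mul _ _ _).trans <| mul_eq_bot_of_ne_of_ne_bot_of_ne_top
    (hbot I) (htop I) (hbot J) (htop J) (e.injective.ne (Subtype.val_injective.ne hIJ))

end ProdField

universe u

theorem stmt6 (R : Type u) [CommRing R] [Nontrivial R] [IsReduced R] (hdom : ¬IsDomain R) :
    List.TFAE [
      ∀ I J : AnnVert R, I ≠ J → (annihilatorIdealGraph R).Adj I J,
      ∀ I J : AnnVert R, I ≠ J → (annihilatingIdealGraph R).Adj I J,
      ∃ (F₁ F₂ : Type u) (_ : Field F₁) (_ : Field F₂), Nonempty (R ≃+* F₁ × F₂)] := by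
  tfae_have 2 → 1 := fun h I J hIJ =>
    annihilatingIdealGraph_le_annihilatorIdealGraph R (h I J hIJ)
  tfae_have 3 → 2 := fun ⟨_, _, _, _, ⟨φ⟩⟩ _ _ hIJ =>
    annihilatingIdealGraph_adj_of_ringEquiv_prod φ hIJ
  tfae_have 1 → 3 := by
    intro hc
    obtain ⟨e, he, he0, he1⟩ := exists_isIdempotentElem_ne_zero_ne_one hc hdom
    have := isMaximal_span_singleton_of_isIdempotentElem hc he he0 he1
    have := isMaximal_span_singleton_of_isIdempotentElem hc he.one_sub
      (sub_ne_zero.mpr he1.symm) (by simpa using he0)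
    exact ⟨_, _, Quotient.field _, Quotient.field _, ⟨(AlgEquiv.prodQuotientOfIsIdempotentElem ℤ
      he he.one_sub (add_sub_cancel e 1) he.mul_one_sub_self).toRingEquiv⟩⟩
  tfae_finish
end
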